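/- If d_H(Gr(h), Gr(h')) ≤ ε for the graphs of two sampled maps, then at every radius r there are inclusions S_r ⊆ S'_{r+ε}, h(S)_r ⊆ h'(S')_{r+ε}, and Gr(h)_r ⊆ Gr(h')_{r+ε} commuting with the projections, and symmetrically with the roles of h and h' swapped; these inclusions form an ε-interleaving of the A_3(bf)-valued filtrations. -/

import Mathlib

open EMetric ENNReal Set

noncomputable section

variable (n : ℕ)

/-- The ambient Euclidean space. -/
abbrev Euc (n : ℕ) := EuclideanSpace ℝ (Fin n)

/-- The closed `r`-offset of a set. -/
def off {α : Type*} [PseudoEMetricSpace α] (A : Set α) (r : ℝ≥0∞) : Set α :=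
  {x | infEdist x A ≤ r}

/-- The graph of a sampled map `h : S → ℝⁿ`, as a subset of `ℝⁿ × ℝⁿ`
(the product carries the max-metric). -/
def gr {n : ℕ} {S : Set (Euc n)} (h : S → Euc n) : Set (Euc n × Euc n) :=
  Set.range fun s : S => ((s : Euc n), h s)

/-! Offsets grow by at most the Hausdorff distance, since
`infEDist x B ≤ infEDist x A + d_H(A, B)`. The coordinate projections of the max-metric are
1-Lipschitz, so they carry `d_H(Gr h, Gr h') ≤ ε` down to the domains and the images, and carry
`Gr(h)_r` into `S_r` and `h(S)_r`. -/

section Offsets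

variable {α β : Type*} [PseudoEMetricSpace α] [PseudoEMetricSpace β]

theorem LipschitzWith.infEDist_image_le {f : α → β} (hf : LipschitzWith 1 f) (x : α)
    (A : Set α) : Metric.infEDist (f x) (f '' A) ≤ Metric.infEDist x A :=
  Metric.le_infEDist.2 fun y hy =>
    (Metric.infEDist_le_edist_of_mem (mem_image_of_mem f hy)).trans (by simpa using hf x y)

theorem LipschitzWith.hausdorffEDist_image_le {f : α → β} (hf : LipschitzWith 1 f)
    (A B : Set α) : Metric.hausdorffEDist (f '' A) (f '' B) ≤ Metric.hausdorffEDist A B := by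
  refine Metric.hausdorffEDist_le_of_infEDist ?_ ?_
  · rintro _ ⟨x, hx, rfl⟩
    exact (hf.infEDist_image_le x B).trans (Metric.infEDist_le_hausdorffEDist_of_mem hx)
  · rintro _ ⟨x, hx, rfl⟩
    rw [Metric.hausdorffEDist_comm]
    exact (hf.infEDist_image_le x A).trans (Metric.infEDist_le_hausdorffEDist_of_mem hx)

theorem LipschitzWith.image_off_subset {f : α → β} (hf : LipschitzWith 1 f) (A : Set α)
    (r : ℝ≥0∞) : f '' off A r ⊆ off (f '' A) r := by
  rintro _ ⟨x, hx, rfl⟩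
  exact (hf.infEDist_image_le x A).trans hx

theorem off_subset_off_add_of_hausdorffEDist_le {A B : Set α} {ε : ℝ≥0∞}
    (hAB : Metric.hausdorffEDist A B ≤ ε) (r : ℝ≥0∞) : off A r ⊆ off B (r + ε) :=
  fun _ hx => Metric.infEDist_le_infEDist_add_hausdorffEDist.trans (add_le_add hx hAB)

theorem off_interleaved_of_hausdorffEDist_le {A B : Set α} {ε : ℝ≥0∞}
    (hAB : Metric.hausdorffEDist A B ≤ ε) (r : ℝ≥0∞) :
    off A r ⊆ off B (r + ε) ∧ off B r ⊆ off A (r + ε) :=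
  ⟨off_subset_off_add_of_hausdorffEDist_le hAB r,
    off_subset_off_add_of_hausdorffEDist_le (Metric.hausdorffEDist_comm.trans_le hAB) r⟩

end Offsets

theorem image_fst_gr {n : ℕ} {S : Set (Euc n)} (h : S → Euc n) : Prod.fst '' gr h = S := by
  simp [gr, ← range_comp, Function.comp_def]

theorem image_snd_gr {n : ℕ} {S : Set (Euc n)} (h : S → Euc n) :
    Prod.snd '' gr h = range h := by
  simp [gr, ← range_comp, Function.comp_def]

theorem sampled_map_offset_interleaving
    {S S' : Set (Euc n)}
    (h : S → Euc n) (h' : S' → Euc n) (ε : ℝ≥0∞)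
    (hd : hausdorffEdist (gr h) (gr h') ≤ ε) :
    ∀ r : ℝ≥0∞,
      off S r ⊆ off S' (r + ε) ∧ off S' r ⊆ off S (r + ε) ∧
      off (Set.range h) r ⊆ off (Set.range h') (r + ε) ∧
      off (Set.range h') r ⊆ off (Set.range h) (r + ε) ∧
      off (gr h) r ⊆ off (gr h') (r + ε) ∧
      off (gr h') r ⊆ off (gr h) (r + ε) ∧
      Prod.fst '' off (gr h) r ⊆ off S r ∧
      Prod.snd '' off (gr h) r ⊆ off (Set.range h) r ∧
      Prod.fst '' off (gr h') r ⊆ off S' r ∧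
      Prod.snd '' off (gr h') r ⊆ off (Set.range h') r := by
  intro r
  have hfst : LipschitzWith 1 (Prod.fst : Euc n × Euc n → Euc n) := LipschitzWith.prod_fst
  have hsnd : LipschitzWith 1 (Prod.snd : Euc n × Euc n → Euc n) := LipschitzWith.prod_snd
  have hS : Metric.hausdorffEDist S S' ≤ ε := by
    simpa only [image_fst_gr] using (hfst.hausdorffEDist_image_le (gr h) (gr h')).trans hd
  have hR : Metric.hausdorffEDist (range h) (range h') ≤ ε := by
    simpa only [image_snd_gr] using (hsnd.hausdorffEDist_image_le (gr h) (gr h')).trans hd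
  obtain ⟨hSS', hS'S⟩ := off_interleaved_of_hausdorffEDist_le hS r
  obtain ⟨hRR', hR'R⟩ := off_interleaved_of_hausdorffEDist_le hR r
  obtain ⟨hGG', hG'G⟩ := off_interleaved_of_hausdorffEDist_le hd r
  refine ⟨hSS', hS'S, hRR', hR'R, hGG', hG'G, ?_, ?_, ?_, ?_⟩
  · simpa only [image_fst_gr] using hfst.image_off_subset (gr h) r
  · simpa only [image_snd_gr] using hsnd.image_off_subset (gr h) r
  · simpa only [image_fst_gr] using hfst.image_off_subset (gr h') r
  · simpa only [image_snd_gr] using hsnd.image_off_subset (gr h') r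

end
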